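/- arXiv:1610.08561 — 2 statements merged into one kernel-verified Lean document; each statement's English description precedes it below -/
import Mathlib

section
/- Fix s ∈ (0,1] and set D = √(s^2 + 22s + 1), c = (s − 1 + D)/(3s), a = −s, b = (2s − 2 − D)/6, and ψ(x) = −(1/π)(a x + b)√((c − x)/x) for x ∈ (0,c). Then for every real z > c, the Stieltjes transform satisfies ∫_0^c ψ(x)/(z − x) dx = (1 + s(2z − 1))/2 + (a z + b)√((z − c)/z). -/
/-!
The substitution `x = c / (1 + t²)` maps `(0, ∞)` onto `(0, c)` and turns `√((c - x) / x)` into `t`,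
so the transform becomes the integral over `(0, ∞)` of a rational function of `t`. Its partial
fractions are multiples of `1 / (1 + t²)`, `1 / (1 + t²)²` and `1 / (z t² + (z - c))`, whose
integrals are `π / 2`, `π / 4` and `π / (2 √(z (z - c)))`.
-/

open MeasureTheory Real

/-- `Δ(s) = √(s² + 22s + 1)`. -/
noncomputable def Dlt (s : ℝ) : ℝ := Real.sqrt (s ^ 2 + 22 * s + 1)

/-- Right endpoint `c = (s - 1 + Δ)/(3s)` of the support of the equilibrium measure. -/
noncomputable def cEnd (s : ℝ) : ℝ := (s - 1 + Dlt s) / (3 * s)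

/-- Density of the equilibrium measure:
`ψ(x) = -(1/π)(a x + b)√((c - x)/x)` with `a = -s`, `b = (2s - 2 - Δ)/6`. -/
noncomputable def psi (s x : ℝ) : ℝ :=
  -(1 / Real.pi) * (-s * x + (2 * s - 2 - Dlt s) / 6) * Real.sqrt ((cEnd s - x) / x)

open Filter Set Topology

section Substitution

variable {c : ℝ}

lemma hasDerivAt_div_one_add_sq (c t : ℝ) :
    HasDerivAt (fun t => c / (1 + t ^ 2)) (-(2 * c * t) / (1 + t ^ 2) ^ 2) t := by
  refine ((hasDerivAt_const t c).div ((hasDerivAt_pow 2 t).const_add 1)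
    (by positivity)).congr_deriv ?_
  ring

lemma strictAntiOn_div_one_add_sq (hc : 0 < c) :
    StrictAntiOn (fun t : ℝ => c / (1 + t ^ 2)) (Ioi 0) := by
  intro t₁ ht₁ t₂ _ h
  have : t₁ ^ 2 < t₂ ^ 2 := pow_lt_pow_left₀ h ht₁.le two_ne_zero
  dsimp only
  gcongr

lemma image_div_one_add_sq_Ioi (hc : 0 < c) :
    (fun t : ℝ => c / (1 + t ^ 2)) '' Ioi 0 = Ioo 0 c := by
  ext x
  constructor
  · rintro ⟨t, ht, rfl⟩
    exact ⟨by positivity, div_lt_self hc (by simpa using pow_pos ht 2)⟩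
  · rintro ⟨hx, hxc⟩
    have hcx : 0 < c / x - 1 := by rw [sub_pos, one_lt_div hx]; exact hxc
    refine ⟨√(c / x - 1), sqrt_pos.mpr hcx, ?_⟩
    simp only [sq_sqrt hcx.le, add_sub_cancel]
    field_simp

theorem integral_Ioo_eq_integral_Ioi_div_one_add_sq {E : Type*} [NormedAddCommGroup E]
    [NormedSpace ℝ E] (hc : 0 < c) (g : ℝ → E) :
    ∫ x in Ioo 0 c, g x = ∫ t in Ioi 0, (2 * c * t / (1 + t ^ 2) ^ 2) • g (c / (1 + t ^ 2)) := by
  rw [← image_div_one_add_sq_Ioi hc, integral_image_eq_integral_abs_deriv_smul measurableSet_Ioi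
    (fun t _ => (hasDerivAt_div_one_add_sq c t).hasDerivWithinAt)
    (strictAntiOn_div_one_add_sq hc).injOn]
  refine setIntegral_congr_fun measurableSet_Ioi fun t (ht : 0 < t) => ?_
  rw [neg_div, abs_neg, abs_of_pos (by positivity)]

end Substitution

lemma tendsto_div_one_add_sq_atTop : Tendsto (fun t : ℝ => t / (1 + t ^ 2)) atTop (𝓝 0) := by
  have h := (tendsto_inv_atTop_zero (𝕜 := ℝ)).div
    ((tendsto_inv_atTop_zero.pow 2).const_add 1) (by norm_num)
  rw [zero_div] at h
  refine h.congr' ?_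
  filter_upwards [eventually_ne_atTop 0] with t ht
  simp only [Pi.div_apply]
  field_simp
  ring

lemma hasDerivAt_arctan_add_div_one_add_sq (t : ℝ) :
    HasDerivAt (fun t => (arctan t + t / (1 + t ^ 2)) / 2) ((1 + t ^ 2) ^ 2)⁻¹ t := by
  refine (((hasDerivAt_arctan t).add ((hasDerivAt_id t).div
    ((hasDerivAt_pow 2 t).const_add 1) (by positivity))).div_const 2).congr_deriv ?_
  simp only [id]
  field_simp
  ring

lemma tendsto_arctan_add_div_one_add_sq_atTop :
    Tendsto (fun t => (arctan t + t / (1 + t ^ 2)) / 2) atTop (𝓝 (π / 4)) := by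
  convert ((tendsto_nhds_of_tendsto_nhdsWithin tendsto_arctan_atTop).add
    tendsto_div_one_add_sq_atTop).div_const 2 using 2
  ring

lemma integrableOn_Ioi_inv_one_add_sq_sq :
    IntegrableOn (fun t : ℝ => ((1 + t ^ 2) ^ 2)⁻¹) (Ioi 0) :=
  integrableOn_Ioi_deriv_of_nonneg' (fun t _ => hasDerivAt_arctan_add_div_one_add_sq t)
    (fun t _ => by positivity) tendsto_arctan_add_div_one_add_sq_atTop

lemma integral_Ioi_inv_one_add_sq_sq : ∫ t in Ioi (0 : ℝ), ((1 + t ^ 2) ^ 2)⁻¹ = π / 4 := by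
  rw [integral_Ioi_of_hasDerivAt_of_nonneg' (fun t _ => hasDerivAt_arctan_add_div_one_add_sq t)
    (fun t _ => by positivity) tendsto_arctan_add_div_one_add_sq_atTop]
  simp

section Scaled

variable {p q : ℝ}

lemma inv_mul_sq_add_eq (hp : 0 < p) (hq : 0 < q) (t : ℝ) :
    (p * t ^ 2 + q)⁻¹ = q⁻¹ * (1 + (√(p / q) * t) ^ 2)⁻¹ := by
  rw [mul_pow, sq_sqrt (by positivity)]
  field_simp
  ring

lemma integrableOn_Ioi_inv_mul_sq_add (hp : 0 < p) (hq : 0 < q) :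
    IntegrableOn (fun t : ℝ => (p * t ^ 2 + q)⁻¹) (Ioi 0) := by
  simp_rw [inv_mul_sq_add_eq hp hq]
  refine Integrable.const_mul ?_ _
  rw [← IntegrableOn,
    integrableOn_Ioi_comp_mul_left_iff (fun t => (1 + t ^ 2)⁻¹) 0 (by positivity)]
  exact integrable_inv_one_add_sq.integrableOn

lemma integral_Ioi_inv_mul_sq_add (hp : 0 < p) (hq : 0 < q) :
    ∫ t in Ioi 0, (p * t ^ 2 + q)⁻¹ = π / (2 * √(p * q)) := by
  simp_rw [inv_mul_sq_add_eq hp hq]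
  rw [integral_const_mul, integral_comp_mul_left_Ioi (fun t => (1 + t ^ 2)⁻¹) 0 (by positivity)]
  have hpq : √(p * q) = q * √(p / q) := by
    rw [← sqrt_sq hq.le, ← sqrt_mul (sq_nonneg q), sqrt_sq hq.le]
    congr 1
    field_simp
  simp only [mul_zero, integral_Ioi_inv_one_add_sq, arctan_zero, sub_zero, smul_eq_mul, hpq]
  field_simp

end Scaled

section StieltjesTransform

variable {a b c z : ℝ}

lemma stieltjes_integrand_subst_eq_partial_fractions (hc : 0 < c) (hcz : c < z) {t : ℝ}
    (ht : 0 < t) :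
    (2 * c * t / (1 + t ^ 2) ^ 2) •
        ((a * (c / (1 + t ^ 2)) + b) * √((c - c / (1 + t ^ 2)) / (c / (1 + t ^ 2)))
          / (z - c / (1 + t ^ 2)))
      = 2 * (a * z + b - a * c) * (1 + t ^ 2)⁻¹ + 2 * a * c * ((1 + t ^ 2) ^ 2)⁻¹
        - 2 * (z - c) * (a * z + b) * (z * t ^ 2 + (z - c))⁻¹ := by
  have hsqrt : √((c - c / (1 + t ^ 2)) / (c / (1 + t ^ 2))) = t := by
    have hsq : (c - c / (1 + t ^ 2)) / (c / (1 + t ^ 2)) = t ^ 2 := by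
      field_simp
      ring
    rw [hsq, sqrt_sq ht.le]
  have hden : t ^ 2 * z + (z - c) ≠ 0 := by nlinarith [sq_nonneg t]
  have hsub : z - c / (1 + t ^ 2) = (z * t ^ 2 + (z - c)) / (1 + t ^ 2) := by
    field_simp
    ring
  rw [hsqrt, hsub, smul_eq_mul]
  field_simp [hden]
  ring

theorem integral_Ioo_mul_sqrt_div_sub (hc : 0 < c) (hcz : c < z) :
    ∫ x in Ioo 0 c, (a * x + b) * √((c - x) / x) / (z - x)
      = π * ((a * z + b) * (1 - √((z - c) / z)) - a * c / 2) := by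
  have hz : 0 < z := hc.trans hcz
  have hzc : 0 < z - c := sub_pos.mpr hcz
  have h₁ :=
    (integrable_inv_one_add_sq.integrableOn (s := Ioi 0)).const_mul (2 * (a * z + b - a * c))
  have h₂ := integrableOn_Ioi_inv_one_add_sq_sq.const_mul (2 * a * c)
  have h₃ := (integrableOn_Ioi_inv_mul_sq_add hz hzc).const_mul (2 * (z - c) * (a * z + b))
  rw [integral_Ioo_eq_integral_Ioi_div_one_add_sq hc,
    setIntegral_congr_fun measurableSet_Ioi
      fun t (ht : 0 < t) => stieltjes_integrand_subst_eq_partial_fractions hc hcz ht,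
    integral_sub (h₁.fun_add h₂) h₃, integral_add h₁ h₂, integral_const_mul, integral_const_mul,
    integral_const_mul,
    integral_Ioi_inv_one_add_sq, arctan_zero, integral_Ioi_inv_one_add_sq_sq,
    integral_Ioi_inv_mul_sq_add hz hzc]
  have hr : √((z - c) / z) = (z - c) / √(z * (z - c)) := by
    rw [sqrt_div hzc.le, sqrt_mul hz.le]
    field_simp
    rw [sq_sqrt hzc.le]
  rw [hr]
  ring

end StieltjesTransform

lemma cEnd_pos {s : ℝ} (hs : 0 < s) : 0 < cEnd s := by
  have hD : (1 - s) ^ 2 < Dlt s ^ 2 := by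
    rw [Dlt, sq_sqrt (by positivity)]
    nlinarith
  have : 1 - s < Dlt s := lt_of_pow_lt_pow_left₀ 2 (sqrt_nonneg _) hD
  unfold cEnd
  apply div_pos <;> linarith

/-- Stieltjes transform of the equilibrium density: for `z > c`,
`∫₀^c ψ(x)/(z - x) dx = (1 + s(2z - 1))/2 + (a z + b)√((z - c)/z)`. -/
theorem equilibrium_density_stieltjes_transform (s : ℝ) (hs : s ∈ Set.Ioc (0 : ℝ) 1)
    (z : ℝ) (hz : cEnd s < z) :
    ∫ x in Set.Ioo (0 : ℝ) (cEnd s), psi s x / (z - x)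
      = (1 + s * (2 * z - 1)) / 2
        + (-s * z + (2 * s - 2 - Dlt s) / 6) * Real.sqrt ((z - cEnd s) / z) := by
  have hs₀ : s ≠ 0 := hs.1.ne'
  have hpsi : ∀ x, psi s x / (z - x) = -(1 / π) *
      ((-s * x + (2 * s - 2 - Dlt s) / 6) * √((cEnd s - x) / x) / (z - x)) := fun x => by
    rw [psi]
    ring
  simp_rw [hpsi]
  rw [integral_const_mul, integral_Ioo_mul_sqrt_div_sub (cEnd_pos hs.1) hz]
  -- `s c = (s - 1 + Δ)/3` makes `a c/2 - b = (1 - s)/2`, so `a c/2 - (a z + b) = V'(z)/2`.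
  have hsc : s * cEnd s = (s - 1 + Dlt s) / 3 := by
    rw [cEnd]
    field_simp
  field_simp
  linear_combination (-6) * hsc
end

section
/- Let z > 0 be a real number and M a natural number. Then the (M+1)×(M+1) determinant det[Γ(z + i + j)]_{i,j=0}^{M} equals ∏_{j=0}^{M} j! · Γ(z + j), where Γ is the Gamma function. -/
open Real Polynomial

/-! Writing `Γ(z + j + i) = Γ(z + j) · (z + j)⁽ⁱ⁾` with the rising factorial `x⁽ⁱ⁾`, the column
factors `Γ(z + j)` come out of the determinant. What remains is `det[(z + j)⁽ⁱ⁾]`; since `x⁽ⁱ⁾` is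
monic of degree `i`, row operations reduce it to the Vandermonde determinant of the points
`z, z + 1, …, z + M`, which is the superfactorial `∏_{j ≤ M} j!`. -/

theorem Real.Gamma_add_nat_eq_mul_ascPochhammer (x : ℝ) (hx : ∀ k : ℕ, x ≠ -k) (n : ℕ) :
    Gamma (x + n) = Gamma x * (ascPochhammer ℝ n).eval x := by
  induction n with
  | zero => simp
  | succ n ih =>
    have hxn : x + n ≠ 0 := fun h => hx n (eq_neg_of_add_eq_zero_left h)
    rw [Nat.cast_succ, ← add_assoc, Gamma_add_one hxn, ih, ascPochhammer_succ_right,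
      eval_mul, eval_add, eval_X, eval_natCast]
    ring

theorem Matrix.det_of_ascPochhammer_eval {R : Type*} [CommRing R] [IsDomain R] {n : ℕ}
    (v : Fin n → R) :
    (of fun i j : Fin n => (ascPochhammer R i).eval (v j)).det = (vandermonde v).det := by
  rw [← det_transpose, det_eval_matrixOfPolynomials_eq_det_vandermonde v
    (fun i => ascPochhammer R i) (fun i => ascPochhammer_natDegree R _)
    (fun i => monic_ascPochhammer R _)]
  rfl

theorem Matrix.det_vandermonde_add_natCast {R : Type*} [CommRing R] (a : R) (M : ℕ) :
    (vandermonde fun i : Fin (M + 1) => a + i).det = M.superFactorial := by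
  simp_rw [add_comm a]
  rw [det_vandermonde_add, det_vandermonde_id_eq_superFactorial]

/-- Determinant evaluation of the Gamma-function Hankel-type matrix:
`det[Γ(z + i + j)]_{i,j=0}^M = ∏_{j=0}^M j! Γ(z + j)`. -/
theorem det_gamma_matrix (z : ℝ) (hz : 0 < z) (M : ℕ) :
    Matrix.det (Matrix.of fun i j : Fin (M + 1) => Real.Gamma (z + (i : ℕ) + (j : ℕ)))
      = ∏ j ∈ Finset.range (M + 1), (Nat.factorial j : ℝ) * Real.Gamma (z + j) := by
  have hentry (i j : Fin (M + 1)) : Gamma (z + (i : ℕ) + (j : ℕ))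
      = Gamma (z + (j : ℕ)) * (ascPochhammer ℝ i).eval (z + (j : ℕ)) := by
    rw [add_right_comm, Gamma_add_nat_eq_mul_ascPochhammer]
    intro k h
    linarith [(Nat.cast_nonneg (j : ℕ) : (0 : ℝ) ≤ _), (Nat.cast_nonneg k : (0 : ℝ) ≤ _)]
  calc _ = (Matrix.of fun i j : Fin (M + 1) =>
          Gamma (z + (j : ℕ)) * (ascPochhammer ℝ i).eval (z + (j : ℕ))).det := by
        simp_rw [hentry]
    _ = (∏ j : Fin (M + 1), Gamma (z + (j : ℕ))) *
          (Matrix.of fun i j : Fin (M + 1) => (ascPochhammer ℝ i).eval (z + (j : ℕ))).det :=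
        Matrix.det_mul_row _ _
    _ = (∏ j : Fin (M + 1), Gamma (z + (j : ℕ))) * M.superFactorial := by
        rw [Matrix.det_of_ascPochhammer_eval, Matrix.det_vandermonde_add_natCast]
    _ = _ := by
        rw [← Nat.prod_range_succ_factorial, Finset.prod_mul_distrib, Nat.cast_prod,
          Fin.prod_univ_eq_prod_range (fun j => Gamma (z + j)), mul_comm]
end
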